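/- For the family Q_{t,s} = [[2,0,0,t],[0,1,s,0],[0,s,−1,0],[t,0,0,−2]] with t,s ≥ 0 and p = t+s, the maximum of (x⊗y)† Q_{t,s} (x⊗y) over unit vectors x,y ∈ ℂ² equals 2 if 0 ≤ p < √3, and equals √((1+p²)(9+p²))/(2p) if p ≥ √3; the minimum equals the negative of the maximum. -/

import Mathlib

open Matrix

/-- Kronecker product vector of `x, y ∈ ℂ²`. -/
def kvec (x y : Fin 2 → ℂ) : Fin 4 → ℂ := ![x 0 * y 0, x 0 * y 1, x 1 * y 0, x 1 * y 1]

/-!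
Writing `a = (‖x₀‖, ‖x₁‖)` and `b = (‖y₀‖, ‖y₁‖)`, the expectation is at most its value at the real
unit vectors `a, b`, since the off-diagonal terms are bounded by `t |x₀x₁y₀y₁|` and `s |x₀x₁y₀y₁|`.
In the double-angle coordinates `(c, σ) = (a₀² - a₁², 2a₀a₁)` and `(d, e) = (b₀² - b₁², 2b₀b₁)`
twice the real expectation is `3c + d + pσe`. Cauchy–Schwarz in `(d, e)` bounds it by
`3c + √(1 + p²σ²)`, which is at most `4` when `p² ≤ 3`, and at most `√((1 + p²)(9 + p²)) / p` by
Cauchy–Schwarz again; equality holds at `c = 3√(1 + p²) / (p√(9 + p²))`, which is admissible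
exactly when `p ≥ √3`. The map `(x₀, x₁) ↦ (x₁, x₀)`, `(y₀, y₁) ↦ (y₁, -y₀)` negates the
expectation, so the minimum is the negative of the maximum.
-/

theorem mul_add_mul_le_sqrt (a b x y : ℝ) :
    a * x + b * y ≤ √((a ^ 2 + b ^ 2) * (x ^ 2 + y ^ 2)) :=
  (le_abs_self _).trans (Real.abs_le_sqrt (by nlinarith [sq_nonneg (a * y - b * x)]))

noncomputable def lnrBound (p : ℝ) : ℝ :=
  if p < √3 then 2 else √((1 + p ^ 2) * (9 + p ^ 2)) / (2 * p)

section DoubleAngle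

variable {p c σ d e : ℝ}

theorem three_mul_add_add_mul_le_two_mul_lnrBound (hp : 0 ≤ p) (hcσ : c ^ 2 + σ ^ 2 = 1)
    (hde : d ^ 2 + e ^ 2 = 1) : 3 * c + d + p * σ * e ≤ 2 * lnrBound p := by
  set W := √(1 + (p * σ) ^ 2)
  have hW : d + p * σ * e ≤ W := by
    simpa [hde] using mul_add_mul_le_sqrt 1 (p * σ) d e
  have hW2 : W ^ 2 = 1 + (p * σ) ^ 2 := Real.sq_sqrt (by positivity)
  unfold lnrBound
  split_ifs with hp3
  · have hp3 : p ^ 2 < 3 := (Real.lt_sqrt hp).mp hp3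
    -- `W² ≤ 1 + 3σ² = 4 - 3c² ≤ (4 - 3c)²`
    have : W ≤ 4 - 3 * c := Real.sqrt_le_iff.mpr
      ⟨by nlinarith, by nlinarith [mul_le_mul_of_nonneg_right hp3.le (sq_nonneg σ)]⟩
    linarith
  · have hp0 : 0 < p := (Real.sqrt_pos.mpr three_pos).trans_le (not_lt.mp hp3)
    -- Cauchy–Schwarz for `(3, p) · (p c, W)`, where `(p c)² + W² = 1 + p²`
    have hCS : 3 * (p * c) + p * W ≤ √((1 + p ^ 2) * (9 + p ^ 2)) := by
      convert mul_add_mul_le_sqrt 3 p (p * c) W using 2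
      linear_combination (-(9 + p ^ 2)) * hW2 - p ^ 2 * (9 + p ^ 2) * hcσ
    rw [← mul_div_assoc, mul_div_mul_left _ _ two_ne_zero, le_div_iff₀ hp0]
    nlinarith

theorem exists_three_mul_add_add_mul_eq_two_mul_lnrBound (hp : 0 ≤ p) :
    ∃ c σ d e : ℝ, c ^ 2 + σ ^ 2 = 1 ∧ 0 ≤ σ ∧ d ^ 2 + e ^ 2 = 1 ∧ 0 ≤ e ∧
      3 * c + d + p * σ * e = 2 * lnrBound p := by
  unfold lnrBound
  split_ifs with hp3
  · exact ⟨1, 0, 1, 0, by norm_num, le_rfl, by norm_num, le_rfl, by norm_num⟩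
  have hp0 : 0 < p := (Real.sqrt_pos.mpr three_pos).trans_le (not_lt.mp hp3)
  have hp4 : 9 ≤ p ^ 4 := by
    have := (Real.sqrt_le_left hp).mp (not_lt.mp hp3)
    nlinarith
  obtain ⟨r₁, hr₁, h₁⟩ : ∃ r, 0 < r ∧ r ^ 2 = 1 + p ^ 2 :=
    ⟨_, Real.sqrt_pos.mpr (by positivity), Real.sq_sqrt (by positivity)⟩
  obtain ⟨r₂, hr₂, h₂⟩ : ∃ r, 0 < r ∧ r ^ 2 = 9 + p ^ 2 :=
    ⟨_, Real.sqrt_pos.mpr (by positivity), Real.sq_sqrt (by positivity)⟩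
  obtain ⟨r₃, hr₃, h₃⟩ : ∃ r, 0 ≤ r ∧ r ^ 2 = p ^ 4 - 9 :=
    ⟨_, Real.sqrt_nonneg _, Real.sq_sqrt (by linarith)⟩
  have hγ : √((1 + p ^ 2) * (9 + p ^ 2)) = r₁ * r₂ := by
    rw [← h₁, ← h₂, ← mul_pow, Real.sqrt_sq (by positivity)]
  refine ⟨3 * r₁ / (p * r₂), r₃ / (p * r₂), r₂ / (p * r₁), r₃ / (p * r₁),
    ?_, by positivity, ?_, by positivity, ?_⟩
  · field_simp
    linear_combination 9 * h₁ + h₃ - p ^ 2 * h₂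
  · field_simp
    linear_combination h₂ + h₃ - p ^ 2 * h₁
  · rw [hγ]
    field_simp
    linear_combination (9 - r₂ ^ 2) * h₁ - p ^ 2 * h₂ + h₃

end DoubleAngle

theorem exists_sq_sub_sq_eq_and_two_mul_eq {c σ : ℝ} (h : c ^ 2 + σ ^ 2 = 1) (hσ : 0 ≤ σ) :
    ∃ a b : ℝ, a ^ 2 + b ^ 2 = 1 ∧ a ^ 2 - b ^ 2 = c ∧ 2 * a * b = σ := by
  have hc : c ^ 2 ≤ 1 := by linarith [sq_nonneg σ]
  have ha : √((1 + c) / 2) ^ 2 = (1 + c) / 2 := Real.sq_sqrt (by nlinarith)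
  have hb : √((1 - c) / 2) ^ 2 = (1 - c) / 2 := Real.sq_sqrt (by nlinarith)
  refine ⟨√((1 + c) / 2), √((1 - c) / 2), by rw [ha, hb]; ring, by rw [ha, hb]; ring, ?_⟩
  rw [← sq_eq_sq₀ (by positivity) hσ, mul_pow, mul_pow, ha, hb]
  linear_combination -h

def realForm (p a b c d : ℝ) : ℝ :=
  2 * a ^ 2 * c ^ 2 + a ^ 2 * d ^ 2 - b ^ 2 * c ^ 2 - 2 * b ^ 2 * d ^ 2 + 2 * p * a * b * c * d

section RealForm

variable {p a b c d : ℝ}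

theorem two_mul_realForm (hab : a ^ 2 + b ^ 2 = 1) (hcd : c ^ 2 + d ^ 2 = 1) :
    2 * realForm p a b c d =
      3 * (a ^ 2 - b ^ 2) + (c ^ 2 - d ^ 2) + p * (2 * a * b) * (2 * c * d) := by
  unfold realForm
  linear_combination 3 * (a ^ 2 - b ^ 2) * hcd + (c ^ 2 - d ^ 2) * hab

theorem realForm_le_lnrBound (hp : 0 ≤ p) (hab : a ^ 2 + b ^ 2 = 1) (hcd : c ^ 2 + d ^ 2 = 1) :
    realForm p a b c d ≤ lnrBound p := by
  have := three_mul_add_add_mul_le_two_mul_lnrBound hp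
    (c := a ^ 2 - b ^ 2) (σ := 2 * a * b) (d := c ^ 2 - d ^ 2) (e := 2 * c * d)
    (by linear_combination (a ^ 2 + b ^ 2 + 1) * hab)
    (by linear_combination (c ^ 2 + d ^ 2 + 1) * hcd)
  linarith [two_mul_realForm (p := p) hab hcd]

end RealForm

theorem exists_realForm_eq_lnrBound {p : ℝ} (hp : 0 ≤ p) :
    ∃ a b c d : ℝ, a ^ 2 + b ^ 2 = 1 ∧ c ^ 2 + d ^ 2 = 1 ∧ realForm p a b c d = lnrBound p := by
  obtain ⟨c, σ, d, e, hcσ, hσ, hde, he, h⟩ := exists_three_mul_add_add_mul_eq_two_mul_lnrBound hp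
  obtain ⟨a₁, b₁, hab₁, rfl, rfl⟩ := exists_sq_sub_sq_eq_and_two_mul_eq hcσ hσ
  obtain ⟨a₂, b₂, hab₂, rfl, rfl⟩ := exists_sq_sub_sq_eq_and_two_mul_eq hde he
  exact ⟨a₁, b₁, a₂, b₂, hab₁, hab₂, by linarith [two_mul_realForm (p := p) hab₁ hab₂]⟩

open Complex ComplexConjugate

def Qts (t s : ℝ) : Matrix (Fin 4) (Fin 4) ℂ :=
  !![2, 0, 0, (t : ℂ); 0, 1, (s : ℂ), 0; 0, (s : ℂ), -1, 0; (t : ℂ), 0, 0, -2]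

def expectQts (t s : ℝ) (x y : Fin 2 → ℂ) : ℝ :=
  (star (kvec x y) ⬝ᵥ Qts t s *ᵥ kvec x y).re

theorem expectQts_eq (t s : ℝ) (x y : Fin 2 → ℂ) :
    expectQts t s x y =
      2 * ‖x 0‖ ^ 2 * ‖y 0‖ ^ 2 + ‖x 0‖ ^ 2 * ‖y 1‖ ^ 2 - ‖x 1‖ ^ 2 * ‖y 0‖ ^ 2
        - 2 * ‖x 1‖ ^ 2 * ‖y 1‖ ^ 2 + 2 * t * (conj (x 0 * y 0) * (x 1 * y 1)).re
        + 2 * s * (conj (x 0 * y 1) * (x 1 * y 0)).re := by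
  simp only [← normSq_eq_norm_sq, normSq_apply, expectQts, Qts, kvec, dotProduct, mulVec,
    Fin.sum_univ_four, of_apply, cons_val', cons_val, cons_val_zero, cons_val_one, cons_val_fin_one,
    Pi.star_apply, RCLike.star_def, map_mul, add_re, neg_re, mul_re, conj_re, conj_im, re_ofNat,
    ofReal_re, zero_re, one_re, add_im, neg_im, mul_im, im_ofNat, ofReal_im, zero_im, one_im]
  ring

theorem expectQts_ofReal (t s a b c d : ℝ) :
    expectQts t s ![(a : ℂ), b] ![(c : ℂ), d] = realForm (t + s) a b c d := by
  simp only [expectQts_eq, realForm, cons_val_zero, cons_val_one, cons_val_fin_one, norm_real,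
    Real.norm_eq_abs, sq_abs, ← ofReal_mul, conj_ofReal, ofReal_re]
  ring

theorem re_conj_mul_comm (z w : ℂ) : (conj z * w).re = (conj w * z).re := by
  rw [← conj_re, map_mul, conj_conj, mul_comm]

theorem expectQts_swap (t s : ℝ) (x y : Fin 2 → ℂ) :
    expectQts t s ![x 1, x 0] ![y 1, -y 0] = -expectQts t s x y := by
  simp only [expectQts_eq, cons_val_zero, cons_val_one, cons_val_fin_one, norm_neg, mul_neg,
    map_neg, neg_mul, neg_re, re_conj_mul_comm (x 1 * y 1), re_conj_mul_comm (x 1 * y 0)]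
  ring

theorem re_conj_mul_le (z₁ w₁ z₂ w₂ : ℂ) :
    (conj (z₁ * w₁) * (z₂ * w₂)).re ≤ ‖z₁‖ * ‖z₂‖ * ‖w₁‖ * ‖w₂‖ :=
  (re_le_norm _).trans_eq (by simp only [norm_mul, norm_conj]; ring)

theorem expectQts_le_realForm {t s : ℝ} (ht : 0 ≤ t) (hs : 0 ≤ s) (x y : Fin 2 → ℂ) :
    expectQts t s x y ≤ realForm (t + s) ‖x 0‖ ‖x 1‖ ‖y 0‖ ‖y 1‖ := by
  have h₁ := mul_le_mul_of_nonneg_left (re_conj_mul_le (x 0) (y 0) (x 1) (y 1)) ht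
  have h₂ := mul_le_mul_of_nonneg_left (re_conj_mul_le (x 0) (y 1) (x 1) (y 0)) hs
  rw [expectQts_eq, realForm]
  linarith

theorem norm_sq_add_norm_sq_eq_one {x : Fin 2 → ℂ} (hx : star x ⬝ᵥ x = 1) :
    ‖x 0‖ ^ 2 + ‖x 1‖ ^ 2 = 1 := by
  simpa [dotProduct, Fin.sum_univ_two, ← normSq_eq_norm_sq, normSq_apply, mul_re] using
    congrArg re hx

theorem star_dotProduct_self_ofReal {a b : ℝ} (h : a ^ 2 + b ^ 2 = 1) :
    star ![(a : ℂ), b] ⬝ᵥ ![(a : ℂ), b] = 1 := by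
  have : (a : ℂ) * a + b * b = 1 := by
    exact_mod_cast (by linear_combination h : a * a + b * b = 1)
  simpa [dotProduct, Fin.sum_univ_two] using this

theorem star_dotProduct_self_swap (x : Fin 2 → ℂ) :
    star ![x 1, x 0] ⬝ᵥ ![x 1, x 0] = star x ⬝ᵥ x := by
  simp [dotProduct, Fin.sum_univ_two, add_comm]

theorem star_dotProduct_self_rot (y : Fin 2 → ℂ) :
    star ![y 1, -y 0] ⬝ᵥ ![y 1, -y 0] = star y ⬝ᵥ y := by
  simp [dotProduct, Fin.sum_univ_two, add_comm]

theorem IsGreatest.isLeast_neg {α : Type*} [AddCommGroup α] [PartialOrder α]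
    [IsOrderedAddMonoid α] {S : Set α} {γ : α} (h : IsGreatest S γ) (hS : ∀ r ∈ S, -r ∈ S) :
    IsLeast S (-γ) :=
  ⟨hS γ h.1, fun r hr => neg_le.mpr (h.2 (hS r hr))⟩

/-- For `Q_{t,s} = [[2,0,0,t],[0,1,s,0],[0,s,-1,0],[t,0,0,-2]]` with `t,s ≥ 0` and
`p = t + s`, the maximum of the expectation over unit product vectors is `2` if
`p < √3` and `√((1+p²)(9+p²))/(2p)` if `p ≥ √3`; the minimum is its negative. -/
theorem LNR_Qts (t s : ℝ) (ht : 0 ≤ t) (hs : 0 ≤ s) :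
    let Q : Matrix (Fin 4) (Fin 4) ℂ :=
      !![2, 0, 0, (t : ℂ); 0, 1, (s : ℂ), 0; 0, (s : ℂ), -1, 0; (t : ℂ), 0, 0, -2]
    let p : ℝ := t + s
    let γ : ℝ := if p < Real.sqrt 3 then 2
      else Real.sqrt ((1 + p ^ 2) * (9 + p ^ 2)) / (2 * p)
    let S : Set ℝ := {r | ∃ x y : Fin 2 → ℂ, star x ⬝ᵥ x = 1 ∧ star y ⬝ᵥ y = 1 ∧
      (star (kvec x y) ⬝ᵥ Q.mulVec (kvec x y)).re = r}
    IsGreatest S γ ∧ IsLeast S (-γ) := by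
  intro Q p γ S
  change IsGreatest S (lnrBound (t + s)) ∧ IsLeast S (-lnrBound (t + s))
  have hp : 0 ≤ t + s := add_nonneg ht hs
  have hmax : IsGreatest S (lnrBound (t + s)) := by
    constructor
    · obtain ⟨a, b, c, d, hab, hcd, h⟩ := exists_realForm_eq_lnrBound hp
      exact ⟨_, _, star_dotProduct_self_ofReal hab, star_dotProduct_self_ofReal hcd,
        (expectQts_ofReal t s a b c d).trans h⟩
    · rintro r ⟨x, y, hx, hy, rfl⟩
      exact (expectQts_le_realForm ht hs x y).trans (realForm_le_lnrBound hp
        (norm_sq_add_norm_sq_eq_one hx) (norm_sq_add_norm_sq_eq_one hy))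
  refine ⟨hmax, hmax.isLeast_neg ?_⟩
  rintro r ⟨x, y, hx, hy, rfl⟩
  exact ⟨_, _, (star_dotProduct_self_swap x).trans hx, (star_dotProduct_self_rot y).trans hy,
    expectQts_swap t s x y⟩
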